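/- Let A be a vector space over ℂ with two ℂ-bilinear products · and ∗ satisfying the interchange law (a ∗ b) · (c ∗ d) = (a · c) ∗ (b · d) for all a, b, c, d ∈ A, and let B₁, B₂ : A × A → A be ℂ-bilinear maps. For each t ∈ ℂ define the deformed products a ·ₜ b := a · b + t • B₁(a, b) and a ∗ₜ b := a ∗ b + t • B₂(a, b). If for every t ∈ ℂ the deformed products again satisfy the interchange law, i.e. (a ·ₜ b) ∗ₜ (c ·ₜ d) = (a ∗ₜ c) ·ₜ (b ∗ₜ d) for all a, b, c, d ∈ A, then the pair (B₁, B₂) satisfies the first-order constraint (a · b) ∗ B₁(c, d) + B₁(a, b) ∗ (c · d) − B₁(a ∗ c, b ∗ d) = (a ∗ c) · B₂(b, d) + B₂(a, c) · (b ∗ d) − B₂(a · b, c · d) for all a, b, c, d ∈ A. -/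

import Mathlib

/-! Expanding the deformed interchange law in `t` gives a vector-valued cubic polynomial in `t`
that vanishes identically; its linear coefficient is the difference of the two sides of the
constraint. Evaluating at four points isolates that coefficient. -/

theorem linear_coeff_eq_zero_of_forall_cubic_eq_zero {K V : Type*} [Field K] [CharZero K]
    [AddCommGroup V] [Module K V] (w x y z : V)
    (h : ∀ t : K, w + t • x + t ^ 2 • y + t ^ 3 • z = 0) : x = 0 := by
  -- Lagrange interpolation at `0, 1, -1, 2`, differentiated at `0`.
  have hx : x = (-1 / 2 : K) • (w + (0 : K) • x + (0 : K) ^ 2 • y + (0 : K) ^ 3 • z)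
      + (w + (1 : K) • x + (1 : K) ^ 2 • y + (1 : K) ^ 3 • z)
      - (1 / 3 : K) • (w + (-1 : K) • x + (-1 : K) ^ 2 • y + (-1 : K) ^ 3 • z)
      - (1 / 6 : K) • (w + (2 : K) • x + (2 : K) ^ 2 • y + (2 : K) ^ 3 • z) := by
    module
  simpa only [h, smul_zero, add_zero, sub_zero] using hx

theorem double_algebra_first_order_deformation_constraint_general
    {A : Type*} [AddCommGroup A] [Module ℂ A]
    (cdot ast : A →ₗ[ℂ] A →ₗ[ℂ] A)
    (B₁ B₂ : A →ₗ[ℂ] A →ₗ[ℂ] A)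
    (cdotT : ℂ → A → A → A) (astT : ℂ → A → A → A)
    (hcdotT : ∀ (t : ℂ) (a b : A), cdotT t a b = cdot a b + t • B₁ a b)
    (hastT : ∀ (t : ℂ) (a b : A), astT t a b = ast a b + t • B₂ a b)
    (hdeformed : ∀ (t : ℂ) (a b c d : A),
      astT t (cdotT t a b) (cdotT t c d) = cdotT t (astT t a c) (astT t b d)) :
    ∀ a b c d : A,
      ast (cdot a b) (B₁ c d) + ast (B₁ a b) (cdot c d) - B₁ (ast a c) (ast b d)
        = cdot (ast a c) (B₂ b d) + cdot (B₂ a c) (ast b d)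
          - B₂ (cdot a b) (cdot c d) := by
  intro a b c d
  rw [← sub_eq_zero]
  refine linear_coeff_eq_zero_of_forall_cubic_eq_zero (K := ℂ)
    (ast (cdot a b) (cdot c d) - cdot (ast a c) (ast b d))
    _
    (ast (B₁ a b) (B₁ c d) + B₂ (cdot a b) (B₁ c d) + B₂ (B₁ a b) (cdot c d)
      - cdot (B₂ a c) (B₂ b d) - B₁ (ast a c) (B₂ b d) - B₁ (B₂ a c) (ast b d))
    (B₂ (B₁ a b) (B₁ c d) - B₁ (B₂ a c) (B₂ b d)) fun t => ?_
  have hexpanded := hdeformed t a b c d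
  simp only [hcdotT, hastT, map_add, map_smul, LinearMap.add_apply,
    LinearMap.smul_apply] at hexpanded
  linear_combination (norm := module) hexpanded

/-- **First-order constraint on deformations of a double algebra.**
Let `A` be a ℂ-vector space with two ℂ-bilinear products `cdot` (·) and `ast` (∗)
satisfying the interchange law `(a ∗ b) · (c ∗ d) = (a · c) ∗ (b · d)`, and let
`B₁, B₂` be ℂ-bilinear maps. Deform the products by
`a ·ₜ b = a · b + t • B₁ a b` and `a ∗ₜ b = a ∗ b + t • B₂ a b`. If for every
`t : ℂ` the deformed products again satisfy the interchange law
`(a ·ₜ b) ∗ₜ (c ·ₜ d) = (a ∗ₜ c) ·ₜ (b ∗ₜ d)`, then `(B₁, B₂)` satisfies the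
first-order constraint
`(a·b) ∗ B₁(c,d) + B₁(a,b) ∗ (c·d) − B₁(a∗c, b∗d)
  = (a∗c) · B₂(b,d) + B₂(a,c) · (b∗d) − B₂(a·b, c·d)`. -/
theorem double_algebra_first_order_deformation_constraint
    {A : Type*} [AddCommGroup A] [Module ℂ A]
    (cdot ast : A →ₗ[ℂ] A →ₗ[ℂ] A)
    (interchange : ∀ a b c d : A,
      cdot (ast a b) (ast c d) = ast (cdot a c) (cdot b d))
    (B₁ B₂ : A →ₗ[ℂ] A →ₗ[ℂ] A)
    (cdotT : ℂ → A → A → A) (astT : ℂ → A → A → A)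
    (hcdotT : ∀ (t : ℂ) (a b : A), cdotT t a b = cdot a b + t • B₁ a b)
    (hastT : ∀ (t : ℂ) (a b : A), astT t a b = ast a b + t • B₂ a b)
    (hdeformed : ∀ (t : ℂ) (a b c d : A),
      astT t (cdotT t a b) (cdotT t c d) = cdotT t (astT t a c) (astT t b d)) :
    ∀ a b c d : A,
      ast (cdot a b) (B₁ c d) + ast (B₁ a b) (cdot c d) - B₁ (ast a c) (ast b d)
        = cdot (ast a c) (B₂ b d) + cdot (B₂ a c) (ast b d)
          - B₂ (cdot a b) (cdot c d) :=
  double_algebra_first_order_deformation_constraint_general cdot ast B₁ B₂ cdotT astT hcdotT hastT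
    hdeformed
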